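/- Let n ≥ 1 and let D and D' be two edge-disjoint symmetric chain decompositions of Q_{2n+1}. Then for every integer ℓ with 1 ≤ ℓ ≤ n+1, there exist perfect matchings M and M' of the middle 2ℓ levels graph of Q_{2n+1} such that every edge of M lies on a chain of D, every edge of M' lies on a chain of D', M and M' share no edge, and the union M ∪ M' is a cycle factor of the middle 2ℓ levels graph. -/

import Mathlib

/-- The Hamming weight of a bitstring of length `n`, i.e., its number of 1-bits. -/
def wt {n : ℕ} (x : Fin n → Bool) : ℕ := (Finset.univ.filter fun i => x i = true).card

/-- The `n`-dimensional hypercube: vertices are bitstrings of length `n`, two of which are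
adjacent iff they differ in exactly one position. -/
def cube (n : ℕ) : SimpleGraph (Fin n → Bool) where
  Adj x y := hammingDist x y = 1
  symm := by constructor; intro x y h; rwa [hammingDist_comm]
  loopless := by constructor; intro x h; simp [hammingDist_self] at h
/-- A symmetric chain in the `n`-cube: a path `(x_k, x_{k+1}, …, x_{n−k})` in `cube n`
where `x_i` has Hamming weight `i` for each `k ≤ i ≤ n − k`. -/
def IsSymChain (n : ℕ) (c : List (Fin n → Bool)) : Prop :=
  c ≠ [] ∧ c.Chain' (cube n).Adj ∧
  ∃ k : ℕ, (∀ (i : ℕ) (h : i < c.length), wt (c.get ⟨i, h⟩) = k + i) ∧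
    2 * k + (c.length - 1) = n

/-- A symmetric chain decomposition of the `n`-cube: a collection of symmetric chains
whose vertex sets partition the vertex set. -/
def IsSCD (n : ℕ) (D : Set (List (Fin n → Bool))) : Prop :=
  (∀ c ∈ D, IsSymChain n c) ∧ ∀ x : Fin n → Bool, ∃! c, c ∈ D ∧ x ∈ c

/-- The edges lying on a chain, i.e., the unordered pairs of consecutive entries. -/
def chainEdges {V : Type*} (c : List V) : Set (Sym2 V) :=
  {e | ∃ (i : ℕ) (h : i + 1 < c.length),
    e = s(c.get ⟨i, Nat.lt_of_succ_lt h⟩, c.get ⟨i + 1, h⟩)}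

/-- All edges lying on some chain of the collection `D`. -/
def scdEdges {n : ℕ} (D : Set (List (Fin n → Bool))) : Set (Sym2 (Fin n → Bool)) :=
  ⋃ c ∈ D, chainEdges c

/-- Two chain decompositions are edge-disjoint if no edge lies on a chain of one
and also on a chain of the other. -/
def EdgeDisjointSCD {n : ℕ} (D D' : Set (List (Fin n → Bool))) : Prop :=
  Disjoint (scdEdges D) (scdEdges D')
/-- The vertex set of the middle `2ℓ` levels of the `(2n+1)`-cube: bitstrings with
Hamming weight in the interval `[n+1−ℓ, n+ℓ]`. -/
def middleSet (n l : ℕ) : Set (Fin (2 * n + 1) → Bool) :=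
  {x | n + 1 - l ≤ wt x ∧ wt x ≤ n + l}

/-- The middle `2ℓ` levels graph: the subgraph of the `(2n+1)`-cube induced by the vertices
with Hamming weight in `[n+1−ℓ, n+ℓ]`. -/
def middleGraph (n l : ℕ) : SimpleGraph (middleSet n l) :=
  (cube (2 * n + 1)).induce (middleSet n l)

/-- `H` is a cycle factor of `G`: a spanning subgraph in which every vertex has degree 2. -/
def IsCycleFactor {V : Type*} (G H : SimpleGraph V) : Prop :=
  H ≤ G ∧ ∀ v, (H.neighborSet v).ncard = 2

/-- `H` is a perfect matching of `G`: a spanning subgraph in which every vertex has degree 1. -/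
def IsPerfectMatchingOf {V : Type*} (G H : SimpleGraph V) : Prop :=
  H ≤ G ∧ ∀ v, (H.neighborSet v).ncard = 1

/-!
Every chain of a symmetric chain decomposition of `Q_{2n+1}` is symmetric about the middle
weight `n + 1/2`, so it meets the middle `2ℓ` levels in a subpath with an even number of vertices.
Pairing these vertices bottom-up along the chain yields a perfect matching of the middle levels
graph consisting of chain edges. The matchings coming from two edge-disjoint decompositions give
every vertex two distinct partners, so their union is 2-regular.
-/

open Function

section Pairing

def pairIndex (a i : ℕ) : ℕ := if (i - a) % 2 = 0 then i + 1 else i - 1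

variable {a b i : ℕ}

lemma pairIndex_pairIndex (ha : a ≤ i) : pairIndex a (pairIndex a i) = i := by
  unfold pairIndex; split_ifs <;> omega

lemma pairIndex_eq_succ_or_succ_eq (ha : a ≤ i) :
    pairIndex a i = i + 1 ∨ i = pairIndex a i + 1 := by
  unfold pairIndex; split_ifs <;> omega

lemma pairIndex_mem_Ico (hab : (b - a) % 2 = 0) (hi : i ∈ Set.Ico a b) :
    pairIndex a i ∈ Set.Ico a b := by
  obtain ⟨ha, hb⟩ := hi
  unfold pairIndex; split_ifs <;> constructor <;> omega

end Pairing

section Chains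

variable {V : Type*}

lemma mk_getElem_mem_chainEdges {ch : List V} {i j : ℕ} (hi : i < ch.length) (hj : j < ch.length)
    (hij : j = i + 1 ∨ i = j + 1) : s(ch[i], ch[j]) ∈ chainEdges ch := by
  rcases hij with rfl | rfl
  · exact ⟨i, hj, by simp⟩
  · exact ⟨j, hi, by simp [Sym2.eq_swap]⟩

lemma chainEdges_subset_edgeSet {G : SimpleGraph V} {ch : List V} (hc : ch.IsChain G.Adj) :
    chainEdges ch ⊆ G.edgeSet := by
  rintro _ ⟨i, h, rfl⟩
  simpa using List.isChain_iff_getElem.mp hc i h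

end Chains

namespace IsSCD

variable {m : ℕ} {D : Set (List (Fin m → Bool))}

lemma scdEdges_subset_edgeSet (hD : IsSCD m D) : scdEdges D ⊆ (cube m).edgeSet :=
  Set.iUnion₂_subset fun ch hc => chainEdges_subset_edgeSet (hD.1 ch hc).2.1

noncomputable def chainThrough (hD : IsSCD m D) (x : Fin m → Bool) : List (Fin m → Bool) :=
  (hD.2 x).choose

lemma chainThrough_eq (hD : IsSCD m D) {ch : List (Fin m → Bool)} {x : Fin m → Bool}
    (hc : ch ∈ D) (hx : x ∈ ch) : hD.chainThrough x = ch :=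
  ((hD.2 x).choose_spec.2 ch ⟨hc, hx⟩).symm

end IsSCD

section MiddlePartner

variable {n l : ℕ} {D D' : Set (List (Fin (2 * n + 1) → Bool))}

/-- The vertex at position `i` of a chain with bottom weight `k` has weight `k + i`, so
`n + 1 - l - k` is the position of its lowest vertex in the middle `2l` levels. -/
noncomputable def middlePartner (hD : IsSCD (2 * n + 1) D) (l : ℕ)
    (x : Fin (2 * n + 1) → Bool) : Fin (2 * n + 1) → Bool :=
  let ch := hD.chainThrough x
  let k := wt (ch.getD 0 x)
  ch.getD (pairIndex (n + 1 - l - k) (wt x - k)) x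

lemma middlePartner_getElem (hD : IsSCD (2 * n + 1) D) {ch : List (Fin (2 * n + 1) → Bool)}
    (hcD : ch ∈ D) {k : ℕ}
    (hk : ∀ (i : ℕ) (h : i < ch.length), wt (ch.get ⟨i, h⟩) = k + i)
    {i : ℕ} (hi : i < ch.length) (hp : pairIndex (n + 1 - l - k) i < ch.length) :
    middlePartner hD l ch[i] = ch[pairIndex (n + 1 - l - k) i] := by
  have h0 : wt (ch.getD 0 ch[i]) = k := by
    rw [List.getD_eq_getElem _ _ (by omega)]
    simpa using hk 0 (by omega)
  have hwi : wt ch[i] = k + i := by simpa using hk i hi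
  unfold middlePartner
  rw [hD.chainThrough_eq hcD (List.getElem_mem hi)]
  simp only [h0, hwi, Nat.add_sub_cancel_left]
  exact List.getD_eq_getElem _ _ hp

lemma middlePartner_spec (hD : IsSCD (2 * n + 1) D) {x : Fin (2 * n + 1) → Bool}
    (hx : x ∈ middleSet n l) :
    middlePartner hD l x ∈ middleSet n l ∧ s(x, middlePartner hD l x) ∈ scdEdges D ∧
      middlePartner hD l (middlePartner hD l x) = x := by
  obtain ⟨ch, ⟨hcD, hxc⟩, -⟩ := hD.2 x
  obtain ⟨-, -, k, hk, hlen⟩ := hD.1 ch hcD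
  obtain ⟨i, hi, rfl⟩ := List.getElem_of_mem hxc
  have hwi : wt ch[i] = k + i := by simpa using hk i hi
  obtain ⟨hlo, hhi⟩ := hx
  have hai : n + 1 - l - k ≤ i := by omega
  -- `2k + (length - 1) = 2n + 1`: the chain is symmetric about weight `n + 1/2`, so the
  -- positions of its vertices in the middle levels form an interval of even length
  obtain ⟨hpa, hpb⟩ :=
    pairIndex_mem_Ico (b := min ch.length (n + l + 1 - k)) (by omega) ⟨hai, by omega⟩
  have hpl : pairIndex (n + 1 - l - k) i < ch.length := by omega
  have hwp : wt ch[pairIndex (n + 1 - l - k) i] = k + pairIndex (n + 1 - l - k) i := by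
    simpa using hk _ hpl
  rw [middlePartner_getElem hD hcD hk hi hpl]
  refine ⟨⟨by omega, by omega⟩, ?_, ?_⟩
  · exact Set.mem_biUnion hcD
      (mk_getElem_mem_chainEdges hi hpl (pairIndex_eq_succ_or_succ_eq hai))
  · have hback := pairIndex_pairIndex hai
    rw [middlePartner_getElem hD hcD hk hpl (by rwa [hback])]
    simp only [hback]

lemma mapsTo_middlePartner (hD : IsSCD (2 * n + 1) D) (l : ℕ) :
    Set.MapsTo (middlePartner hD l) (middleSet n l) (middleSet n l) :=
  fun _ hx => (middlePartner_spec hD hx).1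

lemma mk_middlePartner_mem_scdEdges (hD : IsSCD (2 * n + 1) D) {x : Fin (2 * n + 1) → Bool}
    (hx : x ∈ middleSet n l) : s(x, middlePartner hD l x) ∈ scdEdges D :=
  (middlePartner_spec hD hx).2.1

lemma middlePartner_middlePartner (hD : IsSCD (2 * n + 1) D) {x : Fin (2 * n + 1) → Bool}
    (hx : x ∈ middleSet n l) : middlePartner hD l (middlePartner hD l x) = x :=
  (middlePartner_spec hD hx).2.2

lemma cube_adj_middlePartner (hD : IsSCD (2 * n + 1) D) {x : Fin (2 * n + 1) → Bool}
    (hx : x ∈ middleSet n l) : (cube (2 * n + 1)).Adj x (middlePartner hD l x) :=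
  hD.scdEdges_subset_edgeSet (mk_middlePartner_mem_scdEdges hD hx)

end MiddlePartner

namespace SimpleGraph

variable {V : Type*}

def ofInvolution (f : V → V) (hf : Involutive f) (hne : ∀ v, f v ≠ v) : SimpleGraph V where
  Adj u v := v = f u
  symm := ⟨fun u v h => by rw [h, hf u]⟩
  loopless := ⟨fun v h => hne v h.symm⟩

variable {f g : V → V} (hf : Involutive f) (hfne : ∀ v, f v ≠ v)
  (hg : Involutive g) (hgne : ∀ v, g v ≠ v)

lemma neighborSet_ofInvolution (v : V) : (ofInvolution f hf hfne).neighborSet v = {f v} := rfl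

lemma isPerfectMatchingOf_ofInvolution {G : SimpleGraph V} (hfG : ∀ v, G.Adj v (f v)) :
    IsPerfectMatchingOf G (ofInvolution f hf hfne) :=
  ⟨fun u _ h => h ▸ hfG u, fun v => by
    rw [neighborSet_ofInvolution, Set.ncard_singleton]⟩

lemma isCycleFactor_ofInvolution_sup {G : SimpleGraph V} (hfG : ∀ v, G.Adj v (f v))
    (hgG : ∀ v, G.Adj v (g v)) (hfg : ∀ v, f v ≠ g v) :
    IsCycleFactor G (ofInvolution f hf hfne ⊔ ofInvolution g hg hgne) :=
  ⟨sup_le (isPerfectMatchingOf_ofInvolution hf hfne hfG).1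
      (isPerfectMatchingOf_ofInvolution hg hgne hgG).1, fun v => by
    rw [neighborSet_sup, neighborSet_ofInvolution, neighborSet_ofInvolution,
      Set.singleton_union, Set.ncard_pair (hfg v)]⟩

end SimpleGraph

section MiddleMatching

open SimpleGraph

variable {n l : ℕ} {D D' : Set (List (Fin (2 * n + 1) → Bool))}

noncomputable def middlePartnerOn (hD : IsSCD (2 * n + 1) D) (l : ℕ) :
    middleSet n l → middleSet n l :=
  Set.MapsTo.restrict _ _ _ (mapsTo_middlePartner hD l)

lemma middleGraph_adj_middlePartnerOn (hD : IsSCD (2 * n + 1) D) (x : middleSet n l) :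
    (middleGraph n l).Adj x (middlePartnerOn hD l x) :=
  cube_adj_middlePartner hD x.2

lemma middlePartnerOn_involutive (hD : IsSCD (2 * n + 1) D) :
    Involutive (middlePartnerOn hD l) :=
  fun x => Subtype.ext (middlePartner_middlePartner hD x.2)

lemma middlePartnerOn_ne_of_edgeDisjoint (hD : IsSCD (2 * n + 1) D)
    (hD' : IsSCD (2 * n + 1) D') (hDD' : EdgeDisjointSCD D D') (x : middleSet n l) :
    middlePartnerOn hD l x ≠ middlePartnerOn hD' l x := fun h => by
  have h' : middlePartner hD l x = middlePartner hD' l x := congrArg Subtype.val h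
  exact Set.disjoint_left.mp hDD' (mk_middlePartner_mem_scdEdges hD x.2)
    (h' ▸ mk_middlePartner_mem_scdEdges hD' x.2)

noncomputable def middleMatching (hD : IsSCD (2 * n + 1) D) (l : ℕ) :
    SimpleGraph (middleSet n l) :=
  ofInvolution (middlePartnerOn hD l) (middlePartnerOn_involutive hD)
    fun x => (middleGraph_adj_middlePartnerOn hD x).ne.symm

lemma middleMatching_adj (hD : IsSCD (2 * n + 1) D) {u v : middleSet n l} :
    (middleMatching hD l).Adj u v ↔ v = middlePartnerOn hD l u := Iff.rfl

lemma isPerfectMatchingOf_middleMatching (hD : IsSCD (2 * n + 1) D) :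
    IsPerfectMatchingOf (middleGraph n l) (middleMatching hD l) :=
  isPerfectMatchingOf_ofInvolution _ _ (middleGraph_adj_middlePartnerOn hD)

lemma mk_mem_scdEdges_of_middleMatching_adj (hD : IsSCD (2 * n + 1) D) {u v : middleSet n l}
    (h : (middleMatching hD l).Adj u v) : s(u.val, v.val) ∈ scdEdges D :=
  (middleMatching_adj hD).mp h ▸ mk_middlePartner_mem_scdEdges hD u.2

lemma not_middleMatching_adj_and_adj (hD : IsSCD (2 * n + 1) D) (hD' : IsSCD (2 * n + 1) D')
    (hDD' : EdgeDisjointSCD D D') (u v : middleSet n l) :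
    ¬ ((middleMatching hD l).Adj u v ∧ (middleMatching hD' l).Adj u v) := fun ⟨h, h'⟩ =>
  middlePartnerOn_ne_of_edgeDisjoint hD hD' hDD' u
    (((middleMatching_adj hD).mp h).symm.trans ((middleMatching_adj hD').mp h'))

lemma isCycleFactor_middleMatching_sup (hD : IsSCD (2 * n + 1) D) (hD' : IsSCD (2 * n + 1) D')
    (hDD' : EdgeDisjointSCD D D') :
    IsCycleFactor (middleGraph n l) (middleMatching hD l ⊔ middleMatching hD' l) :=
  isCycleFactor_ofInvolution_sup _ _ _ _ (middleGraph_adj_middlePartnerOn hD)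
    (middleGraph_adj_middlePartnerOn hD') (middlePartnerOn_ne_of_edgeDisjoint hD hD' hDD')

end MiddleMatching

theorem edge_disjoint_SCDs_give_cycle_factor_general (n : ℕ)
    (D D' : Set (List (Fin (2 * n + 1) → Bool)))
    (hD : IsSCD (2 * n + 1) D) (hD' : IsSCD (2 * n + 1) D')
    (hDD' : EdgeDisjointSCD D D')
    (l : ℕ) :
    ∃ M M' : SimpleGraph (middleSet n l),
      IsPerfectMatchingOf (middleGraph n l) M ∧
      IsPerfectMatchingOf (middleGraph n l) M' ∧
      (∀ u v : middleSet n l, M.Adj u v → s(u.val, v.val) ∈ scdEdges D) ∧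
      (∀ u v : middleSet n l, M'.Adj u v → s(u.val, v.val) ∈ scdEdges D') ∧
      (∀ u v : middleSet n l, ¬ (M.Adj u v ∧ M'.Adj u v)) ∧
      IsCycleFactor (middleGraph n l) (M ⊔ M') :=
  ⟨middleMatching hD l, middleMatching hD' l, isPerfectMatchingOf_middleMatching hD,
    isPerfectMatchingOf_middleMatching hD',
    fun _ _ => mk_mem_scdEdges_of_middleMatching_adj hD,
    fun _ _ => mk_mem_scdEdges_of_middleMatching_adj hD',
    not_middleMatching_adj_and_adj hD hD' hDD', isCycleFactor_middleMatching_sup hD hD' hDD'⟩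

/-- Given two edge-disjoint symmetric chain decompositions `D`, `D'` of the `(2n+1)`-cube and
`1 ≤ ℓ ≤ n+1`, there are perfect matchings `M`, `M'` of the middle `2ℓ` levels graph whose
edges lie on chains of `D` resp. `D'`, which share no edge, and whose union is a cycle factor
of the middle `2ℓ` levels graph. -/
theorem edge_disjoint_SCDs_give_cycle_factor (n : ℕ) (hn : 1 ≤ n)
    (D D' : Set (List (Fin (2 * n + 1) → Bool)))
    (hD : IsSCD (2 * n + 1) D) (hD' : IsSCD (2 * n + 1) D')
    (hDD' : EdgeDisjointSCD D D')
    (l : ℕ) (hl1 : 1 ≤ l) (hl2 : l ≤ n + 1) :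
    ∃ M M' : SimpleGraph (middleSet n l),
      IsPerfectMatchingOf (middleGraph n l) M ∧
      IsPerfectMatchingOf (middleGraph n l) M' ∧
      (∀ u v : middleSet n l, M.Adj u v → s(u.val, v.val) ∈ scdEdges D) ∧
      (∀ u v : middleSet n l, M'.Adj u v → s(u.val, v.val) ∈ scdEdges D') ∧
      (∀ u v : middleSet n l, ¬ (M.Adj u v ∧ M'.Adj u v)) ∧
      IsCycleFactor (middleGraph n l) (M ⊔ M') :=
  edge_disjoint_SCDs_give_cycle_factor_general n D D' hD hD' hDD' l
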